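/- Assume the assignment is nested: for all distinct i, j ∈ I, 𝒦_i ∩ 𝒦_j ≠ ∅ implies 𝒦_i ⊆ 𝒦_j or 𝒦_j ⊆ 𝒦_i; assume also that the sets 𝒦_i (i ∈ I) are pairwise distinct. Suppose G(λ) < ∞. Then ψ = ∏_{i∈I} (1 − ρ_{|i}), where ρ_{|i} = λ_i / ( M(𝒦_i) − ∑_{j : 𝒦_j ⊊ 𝒦_i} λ_j ). -/

import Mathlib

open scoped BigOperators

/-- The balance function of balanced fairness: `Φ(0) = 1` and
`Φ(x) = (∑_{i : x_i > 0} Φ(x - e_i)) / M(⋃_{i : x_i > 0} 𝒦_i)`. -/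
noncomputable def Phi {I K : Type} [Fintype I] [DecidableEq I] [DecidableEq K]
    (μ : K → ℝ) (Ka : I → Finset K) (x : I → ℕ) : ℝ :=
  if x = fun _ => 0 then 1
  else (∑ i ∈ (Finset.univ.filter (fun i => 0 < x i)).attach,
      Phi μ Ka (Function.update x i.1 (x i.1 - 1))) /
    (∑ k ∈ (Finset.univ.filter (fun i => 0 < x i)).biUnion Ka, μ k)
termination_by ∑ i, x i
decreasing_by
  have hi := i.2
  simp only [Finset.mem_filter] at hi
  apply Finset.sum_lt_sum
  · intro j _
    rcases eq_or_ne j i.1 with rfl | h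
    · simp [Function.update_self]
    · rw [Function.update_of_ne h]
  · exact ⟨i.1, Finset.mem_univ i.1, by simp [Function.update_self]; omega⟩

/-- The normalization series `G(λ) = ∑_{x∈ℕ^I} Φ(x) λ^x` (as a real tsum). -/
noncomputable def Gf {I K : Type} [Fintype I] [DecidableEq I] [DecidableEq K]
    (μ : K → ℝ) (Ka : I → Finset K) (lam : I → ℝ) : ℝ :=
  ∑' x : I → ℕ, Phi μ Ka x * ∏ i, lam i ^ x i

/-!
For a nested assignment the classes form a forest under strict inclusion of their server sets.
For a set `S` of classes let `G_S` be `G` evaluated at the load restricted to `S` (zero outside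
`S`). If the server sets used by two groups of classes are disjoint, the balance function is
multiplicative, `Φ(x + y) = Φ(x) Φ(y)`, so `G_{S ∪ T} = G_S G_T`. If `r` is a root lying above all
other classes `D` of `S`, every state with `x_r > 0` occupies exactly the servers `𝒦_r`; summing the
balance equations `M(𝒦_r) Φ(x) = ∑_i Φ(x - e_i)` over these states gives
`M(𝒦_r) H = λ_r G_S + Λ(D) H` with `H = G_S - G_D`, that is `G_S = G_D (1 - ρ_{|r})⁻¹`.
Induction over the forest then gives `G = ∏_i (1 - ρ_{|i})⁻¹`.
-/

open Finset

section BalanceFunction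

variable {I K : Type} {μ : K → ℝ} {Ka : I → Finset K} {x y : I → ℕ} {i : I}

lemma disjoint_of_disjoint_servers (hKa : ∀ i, (Ka i).Nonempty) {A B : Finset I}
    (h : ∀ i ∈ A, ∀ j ∈ B, Disjoint (Ka i) (Ka j)) : Disjoint A B :=
  Finset.disjoint_left.2 fun i hiA hiB => (hKa i).ne_empty (disjoint_self.1 (h i hiA i hiB))

section

variable [DecidableEq I]

lemma sub_single_lt (h : 0 < x i) : x - Pi.single i 1 < x :=
  Pi.lt_def.2 ⟨tsub_le_self, i, by simp; omega⟩

lemma add_sub_single_of_pos (h : 0 < x i) :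
    x + y - Pi.single i 1 = x - Pi.single i 1 + y := by
  ext j; rcases eq_or_ne j i with rfl | hj <;> simp [*]; omega

lemma sub_single_add_single (h : 0 < x i) : x - Pi.single i 1 + Pi.single i 1 = x := by
  ext j; rcases eq_or_ne j i with rfl | hj <;> simp [*]; omega

lemma hasSum_ite_sub_single {α : Type*} [AddCommMonoid α] [TopologicalSpace α]
    {f : (I → ℕ) → α} {a : α} (hf : HasSum f a) (j : I) :
    HasSum (fun x : I → ℕ => if 0 < x j then f (x - Pi.single j 1) else 0) a := by
  refine ((add_left_injective (Pi.single j 1)).hasSum_iff fun x hx => ?_).1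
    (by convert hf using 1; ext x; simp)
  refine if_neg fun hxj => hx ⟨x - Pi.single j 1, ?_⟩
  ext i; rcases eq_or_ne i j with rfl | h <;> simp [*]; omega

end

variable [DecidableEq K]

lemma eq_or_ssubset_or_disjoint_of_card_le
    (hnested : ∀ i j : I, i ≠ j → (Ka i ∩ Ka j).Nonempty → Ka i ⊆ Ka j ∨ Ka j ⊆ Ka i)
    (hdistinct : ∀ i j : I, Ka i = Ka j → i = j) {j r : I} (hcard : (Ka j).card ≤ (Ka r).card) :
    j = r ∨ Ka j ⊂ Ka r ∨ Disjoint (Ka j) (Ka r) := by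
  by_cases hjr : j = r
  · exact Or.inl hjr
  by_cases hdisj : Disjoint (Ka j) (Ka r)
  · exact Or.inr (Or.inr hdisj)
  rcases hnested j r hjr (Finset.not_disjoint_iff_nonempty_inter.1 hdisj) with h | h
  · exact Or.inr (Or.inl (Finset.ssubset_iff_subset_ne.2 ⟨h, fun he => hjr (hdistinct j r he)⟩))
  · exact absurd (hdistinct j r (Finset.eq_of_subset_of_card_le h hcard).symm) hjr

variable (μ Ka) in
def capacity (A : Finset I) : ℝ := ∑ k ∈ A.biUnion Ka, μ k

lemma capacity_pos (hμ : ∀ k, 0 < μ k) (hKa : ∀ i, (Ka i).Nonempty) {A : Finset I}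
    (hA : A.Nonempty) : 0 < capacity μ Ka A :=
  Finset.sum_pos (fun k _ => hμ k) (hA.biUnion fun i _ => hKa i)

lemma capacity_union [DecidableEq I] {A B : Finset I}
    (h : ∀ i ∈ A, ∀ j ∈ B, Disjoint (Ka i) (Ka j)) :
    capacity μ Ka (A ∪ B) = capacity μ Ka A + capacity μ Ka B := by
  rw [capacity, Finset.union_biUnion, Finset.sum_union]; · rfl
  exact (Finset.disjoint_biUnion_left _ _ _).2 fun i hi =>
    (Finset.disjoint_biUnion_right _ _ _).2 (h i hi)

variable [Fintype I]

def active (x : I → ℕ) : Finset I := univ.filter (fun i => 0 < x i)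

@[simp] lemma mem_active : i ∈ active x ↔ 0 < x i := by simp [active]

lemma active_eq_empty_iff : active x = ∅ ↔ x = 0 := by
  simp [Finset.eq_empty_iff_forall_notMem, funext_iff]

lemma ne_zero_of_prod_pow_ne_zero {ν : I → ℝ} (h : ∏ j, ν j ^ x j ≠ 0) (hi : 0 < x i) :
    ν i ≠ 0 := fun hν => h (Finset.prod_eq_zero (Finset.mem_univ i) (by simp [hν, hi.ne']))

lemma prod_pow_add_eq_mul_indicator {ν₁ ν₂ : I → ℝ} (hν : ∀ i, ν₁ i ≠ 0 → ν₂ i = 0)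
    (z : I → ℕ) : ∏ i, (ν₁ + ν₂) i ^ z i = (∏ i, ν₁ i ^ (Function.support ν₁).indicator z i)
      * ∏ i, ν₂ i ^ (Function.support ν₁)ᶜ.indicator z i := by
  rw [← Finset.prod_mul_distrib]
  refine Finset.prod_congr rfl fun i _ => ?_
  by_cases hi : ν₁ i = 0
  · simp [hi]
  · simp [hi, hν i hi]

variable [DecidableEq I]

lemma active_add : active (x + y) = active x ∪ active y := by
  ext i; simp

lemma active_sub_single_subset : active (x - Pi.single i 1) ⊆ active x := fun j hj => by
  simp only [mem_active, Pi.sub_apply] at hj ⊢; omega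

lemma Phi_zero : Phi μ Ka 0 = 1 := by
  rw [Phi]; exact if_pos rfl

lemma Phi_of_ne_zero (hx : x ≠ 0) :
    Phi μ Ka x = (∑ i ∈ active x, Phi μ Ka (x - Pi.single i 1)) / capacity μ Ka (active x) := by
  have hupd : ∀ i, Function.update x i (x i - 1) = x - Pi.single i 1 := fun i => by
    ext j; rcases eq_or_ne j i with rfl | h <;> simp [*]
  rw [Phi, if_neg (show x ≠ fun _ => 0 from hx),
    Finset.sum_attach _ (fun i => Phi μ Ka (Function.update x i (x i - 1)))]
  simp only [hupd]
  rfl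

lemma capacity_mul_Phi (hμ : ∀ k, 0 < μ k) (hKa : ∀ i, (Ka i).Nonempty) (x : I → ℕ) :
    capacity μ Ka (active x) * Phi μ Ka x = ∑ i ∈ active x, Phi μ Ka (x - Pi.single i 1) := by
  rcases eq_or_ne x 0 with rfl | hx
  · simp [active_eq_empty_iff.2 rfl, capacity]
  have hA : (active x).Nonempty :=
    Finset.nonempty_iff_ne_empty.2 (mt active_eq_empty_iff.1 hx)
  rw [Phi_of_ne_zero hx, mul_div_cancel₀ _ (capacity_pos hμ hKa hA).ne']

lemma Phi_nonneg (hμ : ∀ k, 0 ≤ μ k) (x : I → ℕ) : 0 ≤ Phi μ Ka x := by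
  induction x using WellFoundedLT.induction with
  | _ x ih =>
    rcases eq_or_ne x 0 with rfl | hx
    · rw [Phi_zero]; exact zero_le_one
    rw [Phi_of_ne_zero hx]
    exact div_nonneg (Finset.sum_nonneg fun i hi => ih _ (sub_single_lt (mem_active.1 hi)))
      (Finset.sum_nonneg fun k _ => hμ k)

theorem Phi_add (hμ : ∀ k, 0 < μ k) (hKa : ∀ i, (Ka i).Nonempty)
    (h : ∀ i ∈ active x, ∀ j ∈ active y, Disjoint (Ka i) (Ka j)) :
    Phi μ Ka (x + y) = Phi μ Ka x * Phi μ Ka y := by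
  induction hz : x + y using WellFoundedLT.induction generalizing x y with
  | _ z ih =>
    subst hz
    rcases eq_or_ne (x + y) 0 with h0 | h0
    · obtain ⟨rfl, rfl⟩ : x = 0 ∧ y = 0 := by
        simpa [funext_iff, forall_and] using h0
      simp [Phi_zero]
    have hcap := (capacity_pos hμ hKa (Finset.nonempty_iff_ne_empty.2
      (mt active_eq_empty_iff.1 h0))).ne'
    refine mul_left_cancel₀ hcap ?_
    have hx : ∀ i ∈ active x, Phi μ Ka (x + y - Pi.single i 1)
        = Phi μ Ka (x - Pi.single i 1) * Phi μ Ka y := fun i hi =>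
      ih _ (sub_single_lt (by simp at hi ⊢; omega))
        (fun i' hi' j hj => h i' (active_sub_single_subset hi') j hj)
        (add_sub_single_of_pos (mem_active.1 hi)).symm
    have hy : ∀ i ∈ active y, Phi μ Ka (x + y - Pi.single i 1)
        = Phi μ Ka x * Phi μ Ka (y - Pi.single i 1) := fun i hi =>
      ih _ (sub_single_lt (by simp at hi ⊢; omega))
        (fun i' hi' j hj => h i' hi' j (active_sub_single_subset hj))
        (by rw [add_comm x y, add_sub_single_of_pos (mem_active.1 hi), add_comm])
    rw [capacity_mul_Phi hμ hKa, active_add, capacity_union h,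
      Finset.sum_union (disjoint_of_disjoint_servers hKa h),
      Finset.sum_congr rfl hx, Finset.sum_congr rfl hy, ← Finset.sum_mul, ← Finset.mul_sum,
      ← capacity_mul_Phi hμ hKa, ← capacity_mul_Phi hμ hKa]
    ring

variable (μ Ka) in
noncomputable def stationaryWeight (ν : I → ℝ) (x : I → ℕ) : ℝ := Phi μ Ka x * ∏ i, ν i ^ x i

lemma prod_pow_add_single (ν : I → ℝ) (x : I → ℕ) (j : I) :
    ∏ i, ν i ^ (x + Pi.single j 1 : I → ℕ) i = ν j * ∏ i, ν i ^ x i := by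
  simp only [Pi.add_apply, pow_add, Finset.prod_mul_distrib, mul_comm (∏ i, ν i ^ x i)]
  simp [Pi.single_apply]

lemma stationaryWeight_nonneg (hμ : ∀ k, 0 ≤ μ k) {ν : I → ℝ} (hν : 0 ≤ ν) (x : I → ℕ) :
    0 ≤ stationaryWeight μ Ka ν x :=
  mul_nonneg (Phi_nonneg hμ x) (Finset.prod_nonneg fun i _ => pow_nonneg (hν i) _)

lemma one_le_of_hasSum_stationaryWeight (hμ : ∀ k, 0 ≤ μ k) {ν : I → ℝ} (hν : 0 ≤ ν) {G : ℝ}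
    (h : HasSum (stationaryWeight μ Ka ν) G) : 1 ≤ G := by
  simpa [stationaryWeight, Phi_zero] using
    le_hasSum h 0 fun x _ => stationaryWeight_nonneg hμ hν x

lemma hasSum_stationaryWeight_zero : HasSum (stationaryWeight μ Ka 0) 1 := by
  convert hasSum_single (f := stationaryWeight μ Ka 0) 0 fun x hx => ?_
  · simp [stationaryWeight, Phi_zero]
  obtain ⟨i, hi⟩ : ∃ i, x i ≠ 0 := by simpa [funext_iff] using hx
  simp [stationaryWeight, Finset.prod_eq_zero (Finset.mem_univ i), hi]

lemma Summable.stationaryWeight_of_le (hμ : ∀ k, 0 ≤ μ k) {ν lam : I → ℝ} (hν : 0 ≤ ν)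
    (hle : ν ≤ lam) (h : Summable (stationaryWeight μ Ka lam)) :
    Summable (stationaryWeight μ Ka ν) :=
  h.of_nonneg_of_le (stationaryWeight_nonneg hμ hν) fun x =>
    mul_le_mul_of_nonneg_left (Finset.prod_le_prod (fun i _ => pow_nonneg (hν i) _)
      fun i _ => pow_le_pow_left₀ (hν i) (hle i) _) (Phi_nonneg hμ x)

lemma stationaryWeight_add_eq_mul_indicator (hμ : ∀ k, 0 < μ k) (hKa : ∀ i, (Ka i).Nonempty)
    {ν₁ ν₂ : I → ℝ} (hdisj : ∀ i j, ν₁ i ≠ 0 → ν₂ j ≠ 0 → Disjoint (Ka i) (Ka j))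
    (hν : ∀ i, ν₁ i ≠ 0 → ν₂ i = 0) (z : I → ℕ) :
    stationaryWeight μ Ka (ν₁ + ν₂) z
      = stationaryWeight μ Ka ν₁ ((Function.support ν₁).indicator z)
        * stationaryWeight μ Ka ν₂ ((Function.support ν₁)ᶜ.indicator z) := by
  set s := Function.support ν₁
  rw [stationaryWeight, prod_pow_add_eq_mul_indicator hν]
  by_cases h0 : (∏ i, ν₁ i ^ s.indicator z i) * ∏ i, ν₂ i ^ sᶜ.indicator z i = 0
  · simp only [stationaryWeight]
    linear_combination (Phi μ Ka z - Phi μ Ka (s.indicator z) * Phi μ Ka (sᶜ.indicator z)) * h0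
  have hPhi : Phi μ Ka z = Phi μ Ka (s.indicator z) * Phi μ Ka (sᶜ.indicator z) := by
    rw [← Phi_add hμ hKa, s.indicator_self_add_compl]
    intro i hi j hj
    have hj' : j ∉ s ∧ 0 < z j := by
      by_cases hjs : j ∈ s <;> simp_all
    refine hdisj i j (Set.mem_of_indicator_ne_zero (mem_active.1 hi).ne') fun hν₂ => ?_
    rw [← prod_pow_add_eq_mul_indicator hν] at h0
    exact ne_zero_of_prod_pow_ne_zero h0 hj'.2 (by simp [Function.notMem_support.1 hj'.1, hν₂])
  rw [hPhi, stationaryWeight, stationaryWeight]; ring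

lemma indicator_support_add_of_stationaryWeight_mul_ne_zero {ν₁ ν₂ : I → ℝ}
    (hν : ∀ i, ν₁ i ≠ 0 → ν₂ i = 0) {x y : I → ℕ}
    (h : stationaryWeight μ Ka ν₁ x * stationaryWeight μ Ka ν₂ y ≠ 0) :
    (Function.support ν₁).indicator (x + y) = x
      ∧ (Function.support ν₁)ᶜ.indicator (x + y) = y := by
  obtain ⟨hx, hy⟩ := mul_ne_zero_iff.1 h
  have hx' : ∀ i, ν₁ i = 0 → x i = 0 := fun i hi => by
    by_contra h
    exact ne_zero_of_prod_pow_ne_zero (right_ne_zero_of_mul hx) (Nat.pos_of_ne_zero h) hi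
  have hy' : ∀ i, ν₁ i ≠ 0 → y i = 0 := fun i hi => by
    by_contra h
    exact ne_zero_of_prod_pow_ne_zero (right_ne_zero_of_mul hy) (Nat.pos_of_ne_zero h) (hν i hi)
  constructor <;> ext i <;> by_cases hi : ν₁ i = 0 <;> simp [hi, hx' i, hy' i]

theorem HasSum.stationaryWeight_add (hμ : ∀ k, 0 < μ k) (hKa : ∀ i, (Ka i).Nonempty)
    {ν₁ ν₂ : I → ℝ} (hdisj : ∀ i j, ν₁ i ≠ 0 → ν₂ j ≠ 0 → Disjoint (Ka i) (Ka j)) {G₁ G₂ : ℝ}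
    (h₁ : HasSum (stationaryWeight μ Ka ν₁) G₁) (h₂ : HasSum (stationaryWeight μ Ka ν₂) G₂) :
    HasSum (stationaryWeight μ Ka (ν₁ + ν₂)) (G₁ * G₂) := by
  set s := Function.support ν₁
  have hν : ∀ i, ν₁ i ≠ 0 → ν₂ i = 0 := fun i hi => by
    by_contra h
    exact (hKa i).ne_empty (disjoint_self.1 (hdisj i i hi h))
  let split (z : I → ℕ) : (I → ℕ) × (I → ℕ) := (s.indicator z, sᶜ.indicator z)
  have hsplit : Function.Injective split := fun z z' h => by
    rw [← s.indicator_self_add_compl z, ← s.indicator_self_add_compl z']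
    exact congrArg₂ (· + ·) (congrArg Prod.fst h) (congrArg Prod.snd h)
  have hrange : ∀ p ∉ Set.range split,
      stationaryWeight μ Ka ν₁ p.1 * stationaryWeight μ Ka ν₂ p.2 = 0 := fun p hp => by
    by_contra h
    obtain ⟨h₁, h₂⟩ := indicator_support_add_of_stationaryWeight_mul_ne_zero hν h
    exact hp ⟨p.1 + p.2, Prod.ext h₁ h₂⟩
  have hprod := h₁.mul h₂ (summable_mul_of_summable_norm h₁.summable.norm h₂.summable.norm)
  rw [← hsplit.hasSum_iff hrange] at hprod
  rwa [funext (stationaryWeight_add_eq_mul_indicator hμ hKa hdisj hν)]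

lemma capacity_mul_stationaryWeight_of_root (hμ : ∀ k, 0 < μ k) (hKa : ∀ i, (Ka i).Nonempty)
    {ν : I → ℝ} {r : I} (hroot : ∀ i, ν i ≠ 0 → Ka i ⊆ Ka r) (hx : 0 < x r) :
    (∑ k ∈ Ka r, μ k) * stationaryWeight μ Ka ν x
      = ∑ i ∈ active x, ν i * stationaryWeight μ Ka ν (x - Pi.single i 1) := by
  have hterm : ∀ i ∈ active x, ν i * stationaryWeight μ Ka ν (x - Pi.single i 1)
      = Phi μ Ka (x - Pi.single i 1) * ∏ j, ν j ^ x j := fun i hi => by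
    rw [stationaryWeight, mul_left_comm, ← prod_pow_add_single,
      sub_single_add_single (mem_active.1 hi)]
  rw [Finset.sum_congr rfl hterm, ← Finset.sum_mul, ← capacity_mul_Phi hμ hKa, stationaryWeight]
  by_cases h0 : ∏ j, ν j ^ x j = 0
  · simp [h0]
  have hservers : (active x).biUnion Ka = Ka r := by
    refine Finset.Subset.antisymm (Finset.biUnion_subset.2 fun i hi => ?_)
      (Finset.subset_biUnion_of_mem Ka (mem_active.2 hx))
    exact hroot i (ne_zero_of_prod_pow_ne_zero h0 (mem_active.1 hi))
  rw [capacity, hservers]; ring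

lemma stationaryWeight_eq_update_zero_add_indicator (ν : I → ℝ) (r : I) (x : I → ℕ) :
    stationaryWeight μ Ka ν x = stationaryWeight μ Ka (Function.update ν r 0) x
      + {y : I → ℕ | 0 < y r}.indicator (stationaryWeight μ Ka ν) x := by
  by_cases hx : 0 < x r
  · have : ∏ i, Function.update ν r 0 i ^ x i = 0 :=
      Finset.prod_eq_zero (Finset.mem_univ r) (by simp [hx.ne'])
    simp [hx, stationaryWeight, this]
  · have : ∏ i, Function.update ν r 0 i ^ x i = ∏ i, ν i ^ x i :=
      Finset.prod_congr rfl fun i _ => by rcases eq_or_ne i r with rfl | h <;> simp_all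
    simp [hx, stationaryWeight, this]

lemma sum_shifted_eq_capacity_mul_indicator (hμ : ∀ k, 0 < μ k) (hKa : ∀ i, (Ka i).Nonempty)
    {ν : I → ℝ} {r : I} (hroot : ∀ i, ν i ≠ 0 → Ka i ⊆ Ka r) (x : I → ℕ) :
    ∑ i, (if 0 < x i then ν i * (if i = r then stationaryWeight μ Ka ν (x - Pi.single i 1)
        else {y : I → ℕ | 0 < y r}.indicator (stationaryWeight μ Ka ν) (x - Pi.single i 1))
      else 0)
      = (∑ k ∈ Ka r, μ k) * {y : I → ℕ | 0 < y r}.indicator (stationaryWeight μ Ka ν) x := by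
  by_cases hx : 0 < x r
  · rw [Set.indicator_of_mem (by exact hx), capacity_mul_stationaryWeight_of_root hμ hKa hroot hx,
      ← Finset.sum_filter]
    refine Finset.sum_congr rfl fun i hi => ?_
    rcases eq_or_ne i r with rfl | h
    · simp
    · rw [if_neg h, Set.indicator_of_mem (by simpa [h.symm] using hx)]
  · rw [Set.indicator_of_notMem (by exact hx), mul_zero]
    refine Finset.sum_eq_zero fun i _ => ?_
    rcases eq_or_ne i r with rfl | h
    · simp [hx]
    · rw [if_neg h, Set.indicator_of_notMem (by simpa [h.symm] using hx)]; simp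

/-- The global balance equations, summed over the states in which class `r` is busy. -/
theorem capacity_mul_eq_of_hasSum_busy (hμ : ∀ k, 0 < μ k) (hKa : ∀ i, (Ka i).Nonempty)
    {ν : I → ℝ} {r : I} (hroot : ∀ i, ν i ≠ 0 → Ka i ⊆ Ka r) {G H : ℝ}
    (hG : HasSum (stationaryWeight μ Ka ν) G)
    (hH : HasSum ({y : I → ℕ | 0 < y r}.indicator (stationaryWeight μ Ka ν)) H) :
    (∑ k ∈ Ka r, μ k) * H = ν r * G + (∑ i ∈ univ.erase r, ν i) * H := by
  have hterm : ∀ i, HasSum (fun y => ν i * if i = r then stationaryWeight μ Ka ν y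
      else {y : I → ℕ | 0 < y r}.indicator (stationaryWeight μ Ka ν) y)
      (ν i * if i = r then G else H) := fun i => by
    split_ifs
    exacts [hG.mul_left _, hH.mul_left _]
  have hshift := hasSum_sum fun i (_ : i ∈ univ) => hasSum_ite_sub_single (hterm i) i
  simp only [sum_shifted_eq_capacity_mul_indicator hμ hKa hroot] at hshift
  rw [(hH.mul_left _).unique hshift, ← Finset.add_sum_erase _ _ (mem_univ r), if_pos rfl,
    Finset.sum_mul]
  congr 1
  exact Finset.sum_congr rfl fun i hi => by rw [if_neg (Finset.ne_of_mem_erase hi)]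

theorem HasSum.stationaryWeight_update_root (hμ : ∀ k, 0 < μ k) (hKa : ∀ i, (Ka i).Nonempty)
    {ν : I → ℝ} (hν : 0 ≤ ν) {r : I} (hνr : ν r = 0) (hroot : ∀ i, ν i ≠ 0 → Ka i ⊆ Ka r)
    {a : ℝ} (ha : 0 ≤ a) {G' : ℝ} (h' : HasSum (stationaryWeight μ Ka ν) G')
    (hs : Summable (stationaryWeight μ Ka (Function.update ν r a))) :
    HasSum (stationaryWeight μ Ka (Function.update ν r a))
      (G' * (1 - a / ((∑ k ∈ Ka r, μ k) - ∑ i, ν i))⁻¹) := by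
  set ν' := Function.update ν r a
  set M := ∑ k ∈ Ka r, μ k
  set L := ∑ i, ν i
  have hupd : Function.update ν r 0 = ν := by rw [← hνr, Function.update_eq_self]
  rcases eq_or_ne a 0 with rfl | ha0
  · simpa [ν', hupd] using h'
  have hν' : 0 ≤ ν' := fun i => by
    rcases eq_or_ne i r with rfl | h
    · simpa [ν'] using ha
    · simpa [ν', h] using hν i
  have hroot' : ∀ i, ν' i ≠ 0 → Ka i ⊆ Ka r := fun i hi => by
    rcases eq_or_ne i r with rfl | h
    · exact subset_rfl
    · exact hroot i (by simpa [ν', h] using hi)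
  obtain ⟨G, hG⟩ := hs
  obtain ⟨H, hH⟩ := hG.summable.indicator {y : I → ℕ | 0 < y r}
  have hGH : G = G' + H := hG.unique <| by
    convert h'.add hH using 1
    ext x
    rw [stationaryWeight_eq_update_zero_add_indicator ν' r x, Function.update_idem, hupd]
  have hbalance : M * H = a * G + L * H := by
    have hL : ∑ i ∈ univ.erase r, ν' i = L := by
      rw [show L = ∑ i, ν i from rfl, ← Finset.sum_erase univ hνr]
      exact Finset.sum_congr rfl fun i hi => by simp [ν', Finset.ne_of_mem_erase hi]
    simpa [ν', hL] using capacity_mul_eq_of_hasSum_busy hμ hKa hroot' hG hH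
  have hG1 := one_le_of_hasSum_stationaryWeight (fun k => (hμ k).le) hν' hG
  have hG'1 := one_le_of_hasSum_stationaryWeight (fun k => (hμ k).le) hν h'
  have hML : M - L ≠ 0 := fun h => by
    have : a * G = 0 := by linear_combination h * H - hbalance
    simp [ha0] at this; linarith
  have hG' : G' = G * (1 - a / (M - L)) := by
    field_simp
    linear_combination -(M - L) * hGH - hbalance
  have hq : 1 - a / (M - L) ≠ 0 := right_ne_zero_of_mul (hG' ▸ (by linarith : G' ≠ 0))
  rwa [hG', mul_inv_cancel_right₀ hq]

lemma HasSum.stationaryWeight_indicator_union (hμ : ∀ k, 0 < μ k) (hKa : ∀ i, (Ka i).Nonempty)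
    {lam : I → ℝ} {A B : Finset I} (hAB : ∀ i ∈ A, ∀ j ∈ B, Disjoint (Ka i) (Ka j)) {G₁ G₂ : ℝ}
    (hA : HasSum (stationaryWeight μ Ka (Set.indicator A lam)) G₁)
    (hB : HasSum (stationaryWeight μ Ka (Set.indicator B lam)) G₂) :
    HasSum (stationaryWeight μ Ka (Set.indicator ↑(A ∪ B) lam)) (G₁ * G₂) := by
  rw [Finset.coe_union, Set.indicator_union_of_disjoint
    (Finset.disjoint_coe.2 (disjoint_of_disjoint_servers hKa hAB))]
  exact hA.stationaryWeight_add hμ hKa (fun i j hi hj =>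
    hAB i (Set.mem_of_indicator_ne_zero hi) j (Set.mem_of_indicator_ne_zero hj)) hB

lemma HasSum.stationaryWeight_indicator_insert (hμ : ∀ k, 0 < μ k) (hKa : ∀ i, (Ka i).Nonempty)
    {lam : I → ℝ} (hlam : 0 ≤ lam) {D : Finset I} {r : I} (hrD : r ∉ D)
    (hD : ∀ j ∈ D, Ka j ⊆ Ka r) {G : ℝ} (h : HasSum (stationaryWeight μ Ka (Set.indicator D lam)) G)
    (hs : Summable (stationaryWeight μ Ka (Set.indicator ↑(insert r D) lam))) :
    HasSum (stationaryWeight μ Ka (Set.indicator ↑(insert r D) lam))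
      (G * (1 - lam r / ((∑ k ∈ Ka r, μ k) - ∑ j ∈ D, lam j))⁻¹) := by
  have hupd :
      Set.indicator ↑(insert r D) lam = Function.update (Set.indicator D lam) r (lam r) := by
    ext i; rcases eq_or_ne i r with rfl | h <;> simp [Set.indicator, *]
  rw [hupd] at hs ⊢
  rw [← Finset.sum_indicator_subset lam (Finset.subset_univ D)]
  exact h.stationaryWeight_update_root hμ hKa (Set.indicator_nonneg fun i _ => hlam i)
    (Set.indicator_of_notMem (by simpa using hrD) _)
    (fun i hi => hD i (Set.mem_of_indicator_ne_zero hi)) (hlam r) hs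

lemma eq_insert_union_of_card_le
    (hnested : ∀ i j : I, i ≠ j → (Ka i ∩ Ka j).Nonempty → Ka i ⊆ Ka j ∨ Ka j ⊆ Ka i)
    (hdistinct : ∀ i j : I, Ka i = Ka j → i = j) {S : Finset I}
    (hS : ∀ i ∈ S, ∀ j, Ka j ⊂ Ka i → j ∈ S) {r : I} (hrS : r ∈ S)
    (hmax : ∀ j ∈ S, (Ka j).card ≤ (Ka r).card) :
    S = insert r (univ.filter fun j => Ka j ⊂ Ka r) ∪ S.filter fun j => Disjoint (Ka j) (Ka r) := by
  ext j
  simp only [Finset.mem_union, Finset.mem_insert, Finset.mem_filter, Finset.mem_univ, true_and]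
  constructor
  · intro hj
    rcases eq_or_ssubset_or_disjoint_of_card_le hnested hdistinct (hmax j hj) with h | h | h
    exacts [Or.inl (Or.inl h), Or.inl (Or.inr h), Or.inr ⟨hj, h⟩]
  · rintro ((rfl | hj) | ⟨hj, -⟩)
    exacts [hrS, hS r hrS j hj, hj]

variable (μ Ka) in
/-- `ρ_{|i}`. -/
noncomputable def residualLoad (lam : I → ℝ) (i : I) : ℝ :=
  lam i / ((∑ k ∈ Ka i, μ k) - ∑ j ∈ univ.filter (fun j => Ka j ⊂ Ka i), lam j)

theorem hasSum_stationaryWeight_indicator (hμ : ∀ k, 0 < μ k) (hKa : ∀ i, (Ka i).Nonempty)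
    {lam : I → ℝ} (hlam : 0 ≤ lam)
    (hnested : ∀ i j : I, i ≠ j → (Ka i ∩ Ka j).Nonempty → Ka i ⊆ Ka j ∨ Ka j ⊆ Ka i)
    (hdistinct : ∀ i j : I, Ka i = Ka j → i = j) (hG : Summable (stationaryWeight μ Ka lam))
    (S : Finset I) (hS : ∀ i ∈ S, ∀ j, Ka j ⊂ Ka i → j ∈ S) :
    HasSum (stationaryWeight μ Ka (Set.indicator S lam))
      (∏ i ∈ S, (1 - residualLoad μ Ka lam i)⁻¹) := by
  induction S using Finset.strongInduction with
  | H S ih =>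
  rcases S.eq_empty_or_nonempty with rfl | hne
  · rw [Finset.coe_empty, Set.indicator_empty, Finset.prod_empty]
    exact hasSum_stationaryWeight_zero
  obtain ⟨r, hrS, hmax⟩ := S.exists_max_image (fun i => (Ka i).card) hne
  set D := univ.filter (fun j => Ka j ⊂ Ka r)
  set R := S.filter (fun j => Disjoint (Ka j) (Ka r))
  have hrD : r ∉ D := by simp [D]
  have hrR : r ∉ R := by simp [R, (hKa r).ne_empty]
  have hDS : D ⊆ S := fun j hj => hS r hrS j (Finset.mem_filter.1 hj).2
  have hSeq : S = insert r D ∪ R := eq_insert_union_of_card_le hnested hdistinct hS hrS hmax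
  have hD := ih D ((Finset.ssubset_iff_of_subset hDS).2 ⟨r, hrS, hrD⟩)
    fun i hi j hj => Finset.mem_filter.2 ⟨mem_univ j, hj.trans (Finset.mem_filter.1 hi).2⟩
  have hR := ih R ((Finset.ssubset_iff_of_subset (Finset.filter_subset _ _)).2 ⟨r, hrS, hrR⟩)
    fun i hi j hj => Finset.mem_filter.2 ⟨hS i (Finset.mem_filter.1 hi).1 j hj,
      (Finset.mem_filter.1 hi).2.mono_left hj.subset⟩
  have hins := hD.stationaryWeight_indicator_insert hμ hKa hlam hrD
    (fun j hj => (Finset.mem_filter.1 hj).2.subset)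
    (hG.stationaryWeight_of_le (fun k => (hμ k).le) (Set.indicator_nonneg fun i _ => hlam i)
      (Set.indicator_le_self' fun i _ => hlam i))
  have hservers : ∀ i ∈ insert r D, ∀ j ∈ R, Disjoint (Ka i) (Ka j) := fun i hi j hj => by
    have hir : Ka i ⊆ Ka r := by
      rcases Finset.mem_insert.1 hi with rfl | hi
      exacts [subset_rfl, (Finset.mem_filter.1 hi).2.subset]
    exact ((Finset.mem_filter.1 hj).2.mono_right hir).symm
  have hr : residualLoad μ Ka lam r = lam r / ((∑ k ∈ Ka r, μ k) - ∑ j ∈ D, lam j) := rfl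
  rw [hSeq, Finset.prod_union (disjoint_of_disjoint_servers hKa hservers),
    Finset.prod_insert hrD, hr]
  convert hins.stationaryWeight_indicator_union hμ hKa hservers hR using 1
  ring

end BalanceFunction

theorem nested_pool_empty_probability_general
    {I K : Type} [Fintype I] [DecidableEq I]
    [DecidableEq K]
    (μ : K → ℝ) (hμ : ∀ k, 0 < μ k)
    (Ka : I → Finset K) (hKa : ∀ i, (Ka i).Nonempty)
    (lam : I → ℝ) (hlam : ∀ i, 0 ≤ lam i)
    (hnested : ∀ i j : I, i ≠ j → (Ka i ∩ Ka j).Nonempty → Ka i ⊆ Ka j ∨ Ka j ⊆ Ka i)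
    (hdistinct : ∀ i j : I, Ka i = Ka j → i = j)
    (hG : Summable (fun x : I → ℕ => Phi μ Ka x * ∏ i, lam i ^ x i)) :
    (Gf μ Ka lam)⁻¹ =
      ∏ i, (1 - lam i /
        ((∑ k ∈ Ka i, μ k) -
          ∑ j ∈ Finset.univ.filter (fun j => Ka j ⊂ Ka i), lam j)) := by
  have h := hasSum_stationaryWeight_indicator hμ hKa hlam hnested hdistinct hG univ
    fun _ _ j _ => mem_univ j
  rw [Finset.coe_univ, Set.indicator_univ] at h
  rw [show Gf μ Ka lam = _ from h.tsum_eq, ← Finset.prod_inv_distrib]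
  simp only [inv_inv, residualLoad]

/-- For a nested assignment (intersecting assigned server sets are
comparable, and the sets `𝒦_i` are pairwise distinct), if `G(λ) < ∞` then
`ψ = ∏_i (1 − ρ_{|i})` where `ρ_{|i} = λ_i / (M(𝒦_i) − ∑_{j : 𝒦_j ⊊ 𝒦_i} λ_j)`. -/
theorem nested_pool_empty_probability
    {I K : Type} [Fintype I] [DecidableEq I] [Nonempty I]
    [Fintype K] [DecidableEq K] [Nonempty K]
    (μ : K → ℝ) (hμ : ∀ k, 0 < μ k)
    (Ka : I → Finset K) (hKa : ∀ i, (Ka i).Nonempty) (hcov : ∀ k, ∃ i, k ∈ Ka i)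
    (lam : I → ℝ) (hlam : ∀ i, 0 ≤ lam i)
    (hnested : ∀ i j : I, i ≠ j → (Ka i ∩ Ka j).Nonempty → Ka i ⊆ Ka j ∨ Ka j ⊆ Ka i)
    (hdistinct : ∀ i j : I, Ka i = Ka j → i = j)
    (hG : Summable (fun x : I → ℕ => Phi μ Ka x * ∏ i, lam i ^ x i)) :
    (Gf μ Ka lam)⁻¹ =
      ∏ i, (1 - lam i /
        ((∑ k ∈ Ka i, μ k) -
          ∑ j ∈ Finset.univ.filter (fun j => Ka j ⊂ Ka i), lam j)) :=
  nested_pool_empty_probability_general μ hμ Ka hKa lam hlam hnested hdistinct hG
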